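/- Let N : L(A) → L(B) be a CPTP map between finite-dimensional complex Hilbert spaces and suppose there exists a unit vector ψ ∈ A with N(|ψ⟩⟨ψ|) = 1_B/|B|. Let ε > 0 and let N̂ : L(A) → L(B) be a CPTP map such that |S(N̂(ρ)) − S(N(ρ))| ≤ ε for every density operator ρ on A. Then the Kraus rank of N̂ satisfies r_K(N̂) ≥ e^{−ε}·|B|. -/

import Mathlib

open scoped Kronecker ENNReal ComplexOrder
open Matrix MeasureTheory

noncomputable section
attribute [local instance] Classical.propDecidable

/-- The singular values of a square complex matrix. -/
def singularValues {m : Type*} [Fintype m] [DecidableEq m] (X : Matrix m m ℂ) : m → ℝ :=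
  fun i => Real.sqrt ((Matrix.posSemidef_conjTranspose_mul_self X).1.eigenvalues i)

/-- The Schatten `p`-norm of a square complex matrix (`p = ⊤` giving the operator norm). -/
def schattenNorm {m : Type*} [Fintype m] [DecidableEq m] (p : ℝ≥0∞) (X : Matrix m m ℂ) : ℝ :=
  if p = ⊤ then ⨆ i, singularValues X i
  else (∑ i, singularValues X i ^ p.toReal) ^ (1 / p.toReal)

/-- `Φ` has the Kraus decomposition given by the family `K`. -/
def HasKraus {a b : Type*} [Fintype a] [Fintype b] {s : ℕ}
    (Φ : Matrix a a ℂ → Matrix b b ℂ) (K : Fin s → Matrix b a ℂ) : Prop :=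
  ∀ X, Φ X = ∑ i, K i * X * (K i)ᴴ

/-- Completely positive map: admits some Kraus decomposition. -/
def IsCP {a b : Type*} [Fintype a] [Fintype b]
    (Φ : Matrix a a ℂ → Matrix b b ℂ) : Prop :=
  ∃ (s : ℕ) (K : Fin s → Matrix b a ℂ), HasKraus Φ K

/-- Trace preserving map. -/
def IsTP {a b : Type*} [Fintype a] [Fintype b]
    (Φ : Matrix a a ℂ → Matrix b b ℂ) : Prop :=
  ∀ X, (Φ X).trace = X.trace

/-- Completely positive and trace preserving map. -/
def IsCPTP {a b : Type*} [Fintype a] [Fintype b]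
    (Φ : Matrix a a ℂ → Matrix b b ℂ) : Prop :=
  IsCP Φ ∧ IsTP Φ

/-- The Kraus rank: minimal number of Kraus operators. -/
def krausRank {a b : Type*} [Fintype a] [Fintype b]
    (Φ : Matrix a a ℂ → Matrix b b ℂ) : ℕ :=
  sInf {s : ℕ | ∃ K : Fin s → Matrix b a ℂ, HasKraus Φ K}

/-- A density operator: positive semidefinite with trace one. -/
def IsDensity {a : Type*} [Fintype a] [DecidableEq a] (ρ : Matrix a a ℂ) : Prop :=
  ρ.PosSemidef ∧ ρ.trace = 1

/-- Loewner order. -/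
def loewnerLE {a : Type*} [Fintype a] (X Y : Matrix a a ℂ) : Prop :=
  (Y - X).PosSemidef

/-- von Neumann entropy. -/
def vonNeumannEntropy {a : Type*} [Fintype a] [DecidableEq a] (ρ : Matrix a a ℂ) : ℝ :=
  if h : ρ.IsHermitian then -∑ i, h.eigenvalues i * Real.log (h.eigenvalues i) else 0

/-- Rényi entropy of order `p ∈ (1,∞]`. -/
def renyiEntropy {a : Type*} [Fintype a] [DecidableEq a] (p : ℝ≥0∞) (ρ : Matrix a a ℂ) : ℝ :=
  if p = ⊤ then -Real.log (schattenNorm ⊤ ρ)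
  else -(p.toReal / (p.toReal - 1)) * Real.log (schattenNorm p ρ)

/-- The factor `p/(p-1)`, read as `1` for `p = ∞`. -/
def pFactor (p : ℝ≥0∞) : ℝ := if p = ⊤ then 1 else p.toReal / (p.toReal - 1)

/-- Square root of a positive semidefinite matrix (junk value otherwise). -/
def psdSqrt {a : Type*} [Fintype a] [DecidableEq a] (ρ : Matrix a a ℂ) : Matrix a a ℂ :=
  if h : ρ.PosSemidef then (h.1.eigenvectorUnitary : Matrix a a ℂ) *
    diagonal (fun i => ((Real.sqrt (h.1.eigenvalues i) : ℝ) : ℂ)) *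
    (star h.1.eigenvectorUnitary : Matrix a a ℂ) else 0

/-- Fidelity `F(σ, ω) = ‖√σ √ω‖₁`. -/
def fidelity {a : Type*} [Fintype a] [DecidableEq a] (σ ω : Matrix a a ℂ) : ℝ :=
  schattenNorm 1 (psdSqrt σ * psdSqrt ω)

/-- Rank-one projection `|v⟩⟨v|`. -/
def projVec {a : Type*} (v : a → ℂ) : Matrix a a ℂ :=
  Matrix.of fun i j => v i * star (v j)

/-- Partial trace over the second tensor factor. -/
def ptraceSnd {b e : Type*} [Fintype e] (M : Matrix (b × e) (b × e) ℂ) : Matrix b b ℂ :=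
  Matrix.of fun i j => ∑ k, M (i, k) (j, k)

/-- Partial trace over the first tensor factor. -/
def ptraceFst {b e : Type*} [Fintype b] (M : Matrix (b × e) (b × e) ℂ) : Matrix e e ℂ :=
  Matrix.of fun k l => ∑ i, M (i, k) (i, l)

/-- The channel `ρ ↦ tr_E (V ρ V†)` associated to an isometry `V : A → B ⊗ E`. -/
def stineChan {a b e : Type*} [Fintype a] [Fintype b] [Fintype e]
    (V : Matrix (b × e) a ℂ) : Matrix a a ℂ → Matrix b b ℂ :=
  fun ρ => ptraceSnd (V * ρ * Vᴴ)

/-- The CP map `N_φ : ρ ↦ |E| tr_E ((1 ⊗ |φ⟩⟨φ|) V ρ V† (1 ⊗ |φ⟩⟨φ|))`. -/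
def stineChanPinned {a b e : Type*} [Fintype a] [Fintype b] [Fintype e] [DecidableEq b]
    (V : Matrix (b × e) a ℂ) (φ : e → ℂ) : Matrix a a ℂ → Matrix b b ℂ :=
  fun ρ => (Fintype.card e : ℂ) •
    ptraceSnd (((1 : Matrix b b ℂ) ⊗ₖ projVec φ) * (V * ρ * Vᴴ) * ((1 : Matrix b b ℂ) ⊗ₖ projVec φ))

/-- `⟨y| M |y⟩`. -/
def qForm {b : Type*} [Fintype b] (y : b → ℂ) (M : Matrix b b ℂ) : ℂ :=
  star y ⬝ᵥ M *ᵥ y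

/-- The uniform (Haar, rotation-invariant) probability measure on the unit sphere of `ℂ^s`. -/
def IsUniformOnSphere {s : ℕ} (μ : Measure (Fin s → ℂ)) : Prop :=
  IsProbabilityMeasure μ ∧
  μ {v : Fin s → ℂ | ∑ i, ‖v i‖ ^ 2 = 1}ᶜ = 0 ∧
  ∀ U ∈ Matrix.unitaryGroup (Fin s) ℂ, μ.map (fun v => U *ᵥ v) = μ

/-! The pure state `|ψ⟩⟨ψ|` is mapped by `N` to the maximally mixed state, of entropy `log |B|`,
so its image `σ` under `N̂` has entropy at least `log |B| - ε`. But `σ` is a sum of `r_K(N̂)`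
rank-one operators, and by concavity of `log` the entropy of a state is at most the logarithm
of its rank. -/

namespace Matrix

variable {R m n : Type*} [Field R] [Fintype n]

lemma rank_add_le (A B : Matrix m n R) : (A + B).rank ≤ A.rank + B.rank := by
  have h : LinearMap.range (A + B).mulVecLin ≤
      LinearMap.range A.mulVecLin ⊔ LinearMap.range B.mulVecLin := by
    rw [mulVecLin_add]
    rintro y ⟨x, rfl⟩
    exact Submodule.add_mem_sup (LinearMap.mem_range_self _ x) (LinearMap.mem_range_self _ x)
  exact (Submodule.finrank_mono h).trans (Submodule.finrank_add_le_finrank_add_finrank _ _)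

lemma rank_sum_le {ι : Type*} (s : Finset ι) (f : ι → Matrix m n R) :
    (∑ i ∈ s, f i).rank ≤ ∑ i ∈ s, (f i).rank := by
  classical
  induction s using Finset.cons_induction with
  | empty => simp
  | cons i s hi ih =>
    rw [Finset.sum_cons, Finset.sum_cons]
    exact (rank_add_le _ _).trans (by omega)

end Matrix

lemma Matrix.IsHermitian.eigenvalues_eq_of_eq_smul_one {𝕜 n : Type*} [RCLike 𝕜] [Fintype n]
    [DecidableEq n] {A : Matrix n n 𝕜} (hA : A.IsHermitian) {c : ℝ} (hc : A = (c : 𝕜) • 1)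
    (i : n) : hA.eigenvalues i = c := by
  subst hc
  rw [hA.eigenvalues_eq]
  simp only [Matrix.smul_mulVec, Matrix.one_mulVec, dotProduct_smul]
  rw [dotProduct_comm, ← EuclideanSpace.inner_eq_star_dotProduct, inner_self_eq_norm_sq_to_K,
    hA.eigenvectorBasis.orthonormal.1 i]
  simp

lemma Real.neg_sum_mul_log_le_log_card {ι : Type*} {s : Finset ι} {p : ι → ℝ}
    (hp : ∀ i ∈ s, 0 < p i) (hs : ∑ i ∈ s, p i = 1) :
    -∑ i ∈ s, p i * Real.log (p i) ≤ Real.log s.card := by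
  have jensen := strictConcaveOn_log_Ioi.concaveOn.le_map_sum (t := s) (w := p)
    (p := fun i => (p i)⁻¹) (fun i hi => (hp i hi).le) hs (fun i hi => inv_pos.2 (hp i hi))
  have hcard : ∑ i ∈ s, p i • (p i)⁻¹ = s.card := by
    simp_rw [smul_eq_mul]
    rw [Finset.sum_congr rfl fun i hi => mul_inv_cancel₀ (hp i hi).ne', Finset.sum_const,
      nsmul_one]
  rw [hcard] at jensen
  simpa [Real.log_inv] using jensen

lemma IsDensity.exp_vonNeumannEntropy_le_rank {n : Type*} [Fintype n] [DecidableEq n]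
    {ρ : Matrix n n ℂ} (hρ : IsDensity ρ) : Real.exp (vonNeumannEntropy ρ) ≤ ρ.rank := by
  have hH := hρ.1.1
  set T := Finset.univ.filter fun i => hH.eigenvalues i ≠ 0
  have hsum : ∑ i ∈ T, hH.eigenvalues i = 1 := by
    rw [Finset.sum_filter_ne_zero]
    have htrace := hH.trace_eq_sum_eigenvalues
    rw [hρ.2] at htrace
    apply Complex.ofReal_injective
    simpa using htrace.symm
  have hpos : ∀ i ∈ T, 0 < hH.eigenvalues i := fun i hi =>
    (hρ.1.eigenvalues_nonneg i).lt_of_ne' (Finset.mem_filter.1 hi).2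
  have hrank : ρ.rank = T.card := by
    rw [hH.rank_eq_card_non_zero_eigs, Fintype.card_subtype]
  have hentropy :
      vonNeumannEntropy ρ = -∑ i ∈ T, hH.eigenvalues i * Real.log (hH.eigenvalues i) := by
    rw [vonNeumannEntropy, dif_pos hH,
      Finset.sum_filter_of_ne (p := fun i => hH.eigenvalues i ≠ 0)
        fun i _ h hi => h (by simp [hi])]
  have hT : T.Nonempty := Finset.nonempty_of_sum_ne_zero (hsum ▸ one_ne_zero)
  rw [hentropy, hrank]
  calc Real.exp (-∑ i ∈ T, hH.eigenvalues i * Real.log (hH.eigenvalues i))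
      ≤ Real.exp (Real.log T.card) :=
        Real.exp_le_exp.2 (Real.neg_sum_mul_log_le_log_card hpos hsum)
    _ = T.card := Real.exp_log (by exact_mod_cast hT.card_pos)

lemma vonNeumannEntropy_maximallyMixed (n : Type*) [Fintype n] [DecidableEq n] :
    vonNeumannEntropy (((Fintype.card n : ℂ))⁻¹ • (1 : Matrix n n ℂ)) =
      Real.log (Fintype.card n) := by
  have hc : ((Fintype.card n : ℂ))⁻¹ • (1 : Matrix n n ℂ) =
      (((Fintype.card n : ℝ)⁻¹ : ℝ) : ℂ) • 1 := by push_cast; rfl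
  have hH : ((((Fintype.card n : ℝ)⁻¹ : ℝ) : ℂ) • (1 : Matrix n n ℂ)).IsHermitian := by
    simp [Matrix.IsHermitian, Matrix.conjTranspose_smul]
  rw [hc, vonNeumannEntropy, dif_pos hH]
  simp only [hH.eigenvalues_eq_of_eq_smul_one (c := (Fintype.card n : ℝ)⁻¹) rfl,
    Finset.sum_const, Finset.card_univ, nsmul_eq_mul, Real.log_inv]
  rcases Nat.eq_zero_or_pos (Fintype.card n) with h | h
  · simp [h]
  · field_simp

lemma projVec_eq_vecMulVec {a : Type*} (v : a → ℂ) : projVec v = vecMulVec v (star v) := rfl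

lemma isDensity_projVec {a : Type*} [Fintype a] [DecidableEq a] {v : a → ℂ}
    (hv : ∑ i, ‖v i‖ ^ 2 = 1) : IsDensity (projVec v) := by
  refine ⟨posSemidef_vecMulVec_self_star v, ?_⟩
  rw [projVec_eq_vecMulVec, trace_vecMulVec, dotProduct]
  simp only [Pi.star_apply, Complex.star_def, Complex.mul_conj, Complex.normSq_eq_norm_sq]
  exact_mod_cast hv

section Kraus

variable {a b : Type*} [Fintype a] [Fintype b] {Φ : Matrix a a ℂ → Matrix b b ℂ}

lemma HasKraus.posSemidef_apply {s : ℕ} {K : Fin s → Matrix b a ℂ} (hK : HasKraus Φ K)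
    {X : Matrix a a ℂ} (hX : X.PosSemidef) : (Φ X).PosSemidef := by
  rw [hK X]
  exact posSemidef_sum _ fun i _ => hX.mul_mul_conjTranspose_same (K i)

lemma HasKraus.rank_apply_le {s : ℕ} {K : Fin s → Matrix b a ℂ} (hK : HasKraus Φ K)
    (X : Matrix a a ℂ) : (Φ X).rank ≤ s * X.rank := by
  rw [hK X]
  calc (∑ i, K i * X * (K i)ᴴ).rank
      ≤ ∑ i, (K i * X * (K i)ᴴ).rank := rank_sum_le _ _
    _ ≤ ∑ _i : Fin s, X.rank := Finset.sum_le_sum fun i _ =>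
        (rank_mul_le_left _ _).trans (rank_mul_le_right _ _)
    _ = s * X.rank := by simp

lemma IsCP.exists_hasKraus_krausRank (hΦ : IsCP Φ) :
    ∃ K : Fin (krausRank Φ) → Matrix b a ℂ, HasKraus Φ K :=
  Nat.sInf_mem (s := {s | ∃ K : Fin s → Matrix b a ℂ, HasKraus Φ K}) hΦ

lemma IsCP.rank_apply_le_krausRank_mul (hΦ : IsCP Φ) (X : Matrix a a ℂ) :
    (Φ X).rank ≤ krausRank Φ * X.rank :=
  let ⟨_, hK⟩ := hΦ.exists_hasKraus_krausRank
  hK.rank_apply_le X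

lemma IsCPTP.isDensity_apply [DecidableEq a] [DecidableEq b] (hΦ : IsCPTP Φ)
    {ρ : Matrix a a ℂ} (hρ : IsDensity ρ) : IsDensity (Φ ρ) :=
  let ⟨_, _, hK⟩ := hΦ.1
  ⟨hK.posSemidef_apply hρ.1, (hΦ.2 ρ).trans hρ.2⟩

end Kraus

theorem stmt18_general (a b : ℕ)
    (N : Matrix (Fin a) (Fin a) ℂ → Matrix (Fin b) (Fin b) ℂ)
    (ψ : Fin a → ℂ) (hψ : ∑ i, ‖ψ i‖ ^ 2 = 1)
    (hNψ : N (projVec ψ) = ((b : ℂ))⁻¹ • 1)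
    (ε : ℝ)
    (Nh : Matrix (Fin a) (Fin a) ℂ → Matrix (Fin b) (Fin b) ℂ) (hNh : IsCPTP Nh)
    (happrox : ∀ ρ : Matrix (Fin a) (Fin a) ℂ, IsDensity ρ →
      |vonNeumannEntropy (Nh ρ) - vonNeumannEntropy (N ρ)| ≤ ε) :
    Real.exp (-ε) * b ≤ (krausRank Nh : ℝ) := by
  set σ := Nh (projVec ψ)
  have hP := isDensity_projVec hψ
  have hNP : vonNeumannEntropy (N (projVec ψ)) = Real.log b := by
    simpa [hNψ] using vonNeumannEntropy_maximallyMixed (Fin b)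
  have hσ_entropy : Real.log b - ε ≤ vonNeumannEntropy σ := by
    linarith [(abs_le.1 (happrox _ hP)).1]
  have hσ_rank : σ.rank ≤ krausRank Nh := by
    have hP_rank : (projVec ψ).rank ≤ 1 := rank_vecMulVec_le ψ (star ψ)
    simpa using (hNh.1.rank_apply_le_krausRank_mul _).trans (Nat.mul_le_mul_left _ hP_rank)
  -- `Real.le_exp_log` also covers `b = 0`, where `Real.log 0 = 0`.
  calc Real.exp (-ε) * b
      ≤ Real.exp (-ε) * Real.exp (Real.log b) := by gcongr; exact Real.le_exp_log _
    _ = Real.exp (Real.log b - ε) := by rw [← Real.exp_add, neg_add_eq_sub]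
    _ ≤ Real.exp (vonNeumannEntropy σ) := Real.exp_le_exp.2 hσ_entropy
    _ ≤ σ.rank := (hNh.isDensity_apply hP).exp_vonNeumannEntropy_le_rank
    _ ≤ krausRank Nh := by exact_mod_cast hσ_rank

/-- a channel with a maximally-mixed output cannot be entropy-approximated
by a channel of Kraus rank smaller than `e^{−ε}|B|`. -/
theorem stmt18 (a b : ℕ)
    (N : Matrix (Fin a) (Fin a) ℂ → Matrix (Fin b) (Fin b) ℂ) (hN : IsCPTP N)
    (ψ : Fin a → ℂ) (hψ : ∑ i, ‖ψ i‖ ^ 2 = 1)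
    (hNψ : N (projVec ψ) = ((b : ℂ))⁻¹ • 1)
    (ε : ℝ) (hε : 0 < ε)
    (Nh : Matrix (Fin a) (Fin a) ℂ → Matrix (Fin b) (Fin b) ℂ) (hNh : IsCPTP Nh)
    (happrox : ∀ ρ : Matrix (Fin a) (Fin a) ℂ, IsDensity ρ →
      |vonNeumannEntropy (Nh ρ) - vonNeumannEntropy (N ρ)| ≤ ε) :
    Real.exp (-ε) * b ≤ (krausRank Nh : ℝ) :=
  stmt18_general a b N ψ hψ hNψ ε Nh hNh happrox
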